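/- Let n ≥ 3 be an integer and let s, t > 0 be real numbers. Then s^{(n+2)/(n−2)} + t^{(n+2)/(n−2)} < (s + t) · (s^{2n/(n−2)} + t^{2n/(n−2)})^{2/n}. -/

import Mathlib

open Real

theorem Real.add_rpow_one_add_mul_lt {s t q r : ℝ} (hs : 0 < s) (ht : 0 < t) (hr : 0 < r) :
    s ^ (1 + q * r) + t ^ (1 + q * r) < (s + t) * (s ^ q + t ^ q) ^ r := by
  have hsq := rpow_pos_of_pos hs q
  have htq := rpow_pos_of_pos ht q
  have factor_lt {x : ℝ} (hx : 0 < x) (hxq : x ^ q < s ^ q + t ^ q) :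
      x ^ (1 + q * r) < x * (s ^ q + t ^ q) ^ r := by
    rw [rpow_add hx, rpow_one, rpow_mul hx.le]
    exact mul_lt_mul_of_pos_left (rpow_lt_rpow (rpow_pos_of_pos hx q).le hxq hr) hx
  calc s ^ (1 + q * r) + t ^ (1 + q * r)
      < s * (s ^ q + t ^ q) ^ r + t * (s ^ q + t ^ q) ^ r :=
        add_lt_add (factor_lt hs (by linarith)) (factor_lt ht (by linarith))
    _ = (s + t) * (s ^ q + t ^ q) ^ r := by ring

/-- **The pointwise strict inequality underlying the branched-cover Aubin lemma.**
For an integer `n ≥ 3` and reals `s, t > 0`,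
`s^{(n+2)/(n−2)} + t^{(n+2)/(n−2)} < (s + t)·(s^{2n/(n−2)} + t^{2n/(n−2)})^{2/n}`. -/
theorem aubin_pointwise_strict (n : ℕ) (hn : 3 ≤ n) (s t : ℝ) (hs : 0 < s) (ht : 0 < t) :
    s ^ (((n : ℝ) + 2) / ((n : ℝ) - 2)) + t ^ (((n : ℝ) + 2) / ((n : ℝ) - 2)) <
      (s + t) * (s ^ (2 * (n : ℝ) / ((n : ℝ) - 2)) +
        t ^ (2 * (n : ℝ) / ((n : ℝ) - 2))) ^ ((2 : ℝ) / (n : ℝ)) := by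
  have hn3 : (3 : ℝ) ≤ n := by exact_mod_cast hn
  have hexp : ((n : ℝ) + 2) / ((n : ℝ) - 2) = 1 + 2 * (n : ℝ) / ((n : ℝ) - 2) * (2 / n) := by
    have : (n : ℝ) - 2 ≠ 0 := by linarith
    field_simp
    ring
  rw [hexp]
  exact add_rpow_one_add_mul_lt hs ht (by positivity)
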